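/- Under the discount-update hypotheses (γ ∈ (0,1), K ∈ S_γ with J_γ(K) > ℓ₀, Ĵ ∈ ℝ with |J_γ(K) − Ĵ| ≤ J_γ(K)/2, ζ ∈ (0,1), α = ℓ₀/(2Ĵ − ℓ₀), γ' = (1 + ζα)γ), for every t ∈ ℕ the damped closed-loop powers at the enlarged discount factor satisfy ‖(√γ'(A − BKC))^t‖ ≤ √(J_γ(K)/ℓ₀)·(1 − (1 − ζ)ℓ₀/(2Ĵ))^{t/2}. -/

import Mathlib

open Matrix

noncomputable section

/-- Spectral radius of a real square matrix: the largest modulus of a complex eigenvalue. -/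
def specRad {n : ℕ} (M : Matrix (Fin n) (Fin n) ℝ) : ℝ :=
  sSup {r : ℝ | ∃ μ ∈ spectrum ℂ (M.map (algebraMap ℝ ℂ)), r = ‖μ‖}

/-- Spectral (ℓ²→ℓ² operator) norm of a real matrix. -/
def spNorm {a b : ℕ} (M : Matrix (Fin a) (Fin b) ℝ) : ℝ :=
  ‖LinearMap.toContinuousLinearMap (Matrix.toEuclideanLin M)‖

/-- Frobenius norm of a real matrix. -/
def frobNorm {a b : ℕ} (M : Matrix (Fin a) (Fin b) ℝ) : ℝ :=
  Real.sqrt (∑ i, ∑ j, (M i j) ^ 2)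

/-- Euclidean norm of a vector. -/
def vecNorm {a : ℕ} (x : Fin a → ℝ) : ℝ :=
  Real.sqrt (∑ i, (x i) ^ 2)

variable {n m p : ℕ}

/-- Closed-loop matrix `A - BKC`. -/
def Acl (A : Matrix (Fin n) (Fin n) ℝ) (B : Matrix (Fin n) (Fin m) ℝ)
    (C : Matrix (Fin p) (Fin n) ℝ) (K : Matrix (Fin m) (Fin p) ℝ) : Matrix (Fin n) (Fin n) ℝ :=
  A - B * K * C

/-- Membership in the stabilizing set `S_γ`: `√γ · ρ(A − BKC) < 1`. -/
def inS (A : Matrix (Fin n) (Fin n) ℝ) (B : Matrix (Fin n) (Fin m) ℝ)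
    (C : Matrix (Fin p) (Fin n) ℝ) (γ : ℝ) (K : Matrix (Fin m) (Fin p) ℝ) : Prop :=
  Real.sqrt γ * specRad (Acl A B C K) < 1

/-- The solution `P_K(γ) = Σ_{t} γ^t ((A−BKC)ᵀ)^t (Q + CᵀKᵀRKC) (A−BKC)^t` of the
discounted Lyapunov equation. -/
def Pmat (A : Matrix (Fin n) (Fin n) ℝ) (B : Matrix (Fin n) (Fin m) ℝ)
    (C : Matrix (Fin p) (Fin n) ℝ) (Q : Matrix (Fin n) (Fin n) ℝ) (R : Matrix (Fin m) (Fin m) ℝ)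
    (γ : ℝ) (K : Matrix (Fin m) (Fin p) ℝ) : Matrix (Fin n) (Fin n) ℝ :=
  ∑' t : ℕ, γ ^ t • ((Acl A B C K)ᵀ ^ t * (Q + Cᵀ * Kᵀ * R * K * C) * (Acl A B C K) ^ t)

/-- The Gramian `Σ_K(γ) = Σ_{t} γ^t (A−BKC)^t ((A−BKC)ᵀ)^t`. -/
def Smat (A : Matrix (Fin n) (Fin n) ℝ) (B : Matrix (Fin n) (Fin m) ℝ)
    (C : Matrix (Fin p) (Fin n) ℝ) (γ : ℝ) (K : Matrix (Fin m) (Fin p) ℝ) :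
    Matrix (Fin n) (Fin n) ℝ :=
  ∑' t : ℕ, γ ^ t • ((Acl A B C K) ^ t * ((Acl A B C K)ᵀ) ^ t)

/-- The discounted cost `J_γ(K) = Tr(P_K(γ))`. -/
def Jcost (A : Matrix (Fin n) (Fin n) ℝ) (B : Matrix (Fin n) (Fin m) ℝ)
    (C : Matrix (Fin p) (Fin n) ℝ) (Q : Matrix (Fin n) (Fin n) ℝ) (R : Matrix (Fin m) (Fin m) ℝ)
    (γ : ℝ) (K : Matrix (Fin m) (Fin p) ℝ) : ℝ :=
  (Pmat A B C Q R γ K).trace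

/-- `E_K = (R + γBᵀP_K(γ)B)KC − γBᵀP_K(γ)A`. -/
def Egrad (A : Matrix (Fin n) (Fin n) ℝ) (B : Matrix (Fin n) (Fin m) ℝ)
    (C : Matrix (Fin p) (Fin n) ℝ) (Q : Matrix (Fin n) (Fin n) ℝ) (R : Matrix (Fin m) (Fin m) ℝ)
    (γ : ℝ) (K : Matrix (Fin m) (Fin p) ℝ) : Matrix (Fin m) (Fin n) ℝ :=
  (R + γ • (Bᵀ * Pmat A B C Q R γ K * B)) * K * C - γ • (Bᵀ * Pmat A B C Q R γ K * A)

/-- The closed-form gradient `∇J_γ(K) = 2 E_K Σ_K(γ) Cᵀ`. -/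
def gradJ (A : Matrix (Fin n) (Fin n) ℝ) (B : Matrix (Fin n) (Fin m) ℝ)
    (C : Matrix (Fin p) (Fin n) ℝ) (Q : Matrix (Fin n) (Fin n) ℝ) (R : Matrix (Fin m) (Fin m) ℝ)
    (γ : ℝ) (K : Matrix (Fin m) (Fin p) ℝ) : Matrix (Fin m) (Fin p) ℝ :=
  (2 : ℝ) • (Egrad A B C Q R γ K * Smat A B C γ K * Cᵀ)

end

/-! The discounted Lyapunov series `P = ∑ γᵗ (Lᵀ)ᵗ M Lᵗ` of the closed loop `L = A - BKC` with
stage cost `M = Q + CᵀKᵀRKC ⪰ ℓ₀ I` converges because `√γ ρ(L) < 1` (Gelfand's formula), and it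
solves `P = M + γ LᵀPL`. Being positive semidefinite, `P ⪯ Tr(P) I = J I`, so the Lyapunov
function `V x = xᵀPx` contracts along the loop:
`γ V(Lx) = V x - xᵀMx ≤ V x - ℓ₀ |x|² ≤ (1 - ℓ₀/J) V x`.
Enlarging the discount to `γ' = (1 + ζα)γ` multiplies the rate by `1 + ζα`, and since `J ≤ 2Ĵ`,
`(1 + ζα)(1 - ℓ₀/J) ≤ (1 + ζα)(1 - ℓ₀/(2Ĵ)) = 1 - (1 - ζ)ℓ₀/(2Ĵ)`. Iterating, and comparing
`ℓ₀ |y|² ≤ V y ≤ J |y|²` at both ends, gives the bound on `‖(√γ' L)ᵗ‖`. -/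

open Filter

theorem spectrum.eventually_norm_pow_le {A : Type*} [NormedRing A] [NormedAlgebra ℂ A]
    [CompleteSpace A] (a : A) {s : ℝ} (hs : spectralRadius ℂ a < ENNReal.ofReal s) :
    ∀ᶠ t : ℕ in atTop, ‖a ^ t‖ ≤ s ^ t := by
  filter_upwards [(pow_norm_pow_one_div_tendsto_nhds_spectralRadius a).eventually_lt_const hs,
    eventually_ne_atTop 0] with t ht ht0
  have hroot : ‖a ^ t‖ ^ (1 / t : ℝ) < s :=
    (ENNReal.ofReal_lt_ofReal_iff_of_nonneg (by positivity)).1 ht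
  calc ‖a ^ t‖ = (‖a ^ t‖ ^ ((t : ℝ)⁻¹)) ^ t :=
        (Real.rpow_inv_natCast_pow (norm_nonneg _) ht0).symm
    _ ≤ s ^ t := by
      rw [← one_div]
      exact pow_le_pow_left₀ (by positivity) hroot.le t

theorem specRad_nonneg {N : ℕ} (M : Matrix (Fin N) (Fin N) ℝ) : 0 ≤ specRad M :=
  Real.sSup_nonneg fun _ ⟨_, _, hr⟩ => hr ▸ norm_nonneg _

theorem spectralRadius_map_le_specRad {N : ℕ} (M : Matrix (Fin N) (Fin N) ℝ) :
    spectralRadius ℂ (M.map (algebraMap ℝ ℂ)) ≤ ENNReal.ofReal (specRad M) := by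
  have hbdd : BddAbove {r : ℝ | ∃ μ ∈ spectrum ℂ (M.map (algebraMap ℝ ℂ)), r = ‖μ‖} := by
    obtain ⟨b, hb⟩ := ((finite_spectrum (M.map (algebraMap ℝ ℂ))).image norm).bddAbove
    exact ⟨b, fun r ⟨μ, hμ, hr⟩ => hr ▸ hb ⟨μ, hμ, rfl⟩⟩
  refine iSup₂_le fun μ hμ => ?_
  rw [← enorm_eq_nnnorm, ← ofReal_norm]
  exact ENNReal.ofReal_le_ofReal (le_csSup hbdd ⟨μ, hμ, rfl⟩)

noncomputable def lyapunovSeries {N : ℕ} (γ : ℝ) (L M : Matrix (Fin N) (Fin N) ℝ) :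
    Matrix (Fin N) (Fin N) ℝ :=
  ∑' t : ℕ, γ ^ t • ((Lᵀ) ^ t * M * L ^ t)

section Frobenius
open scoped Matrix.Norms.Frobenius

theorem hasSum_lyapunovSeries {N : ℕ} (L M : Matrix (Fin N) (Fin N) ℝ) {γ : ℝ} (hγ : 0 < γ)
    (hL : Real.sqrt γ * specRad L < 1) :
    HasSum (fun t : ℕ => γ ^ t • ((Lᵀ) ^ t * M * L ^ t)) (lyapunovSeries γ L M) := by
  have hsqrt : 0 < Real.sqrt γ := Real.sqrt_pos.2 hγ
  obtain ⟨s, hLs, hs⟩ := exists_between ((lt_div_iff₀' hsqrt).2 hL)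
  have hs0 : 0 < s := (specRad_nonneg L).trans_lt hLs
  have hγs : γ * s ^ 2 < 1 := by
    have := (lt_div_iff₀' hsqrt).1 hs
    nlinarith [Real.sq_sqrt hγ.le, mul_pos hsqrt hs0]
  have hρ : spectralRadius ℂ (L.map (algebraMap ℝ ℂ)) < ENNReal.ofReal s :=
    (spectralRadius_map_le_specRad L).trans_lt ((ENNReal.ofReal_lt_ofReal_iff hs0).2 hLs)
  refine Summable.hasSum <| Summable.of_norm_bounded_eventually_nat
    ((summable_geometric_of_lt_one (by positivity) hγs).mul_left ‖M‖) ?_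
  filter_upwards [spectrum.eventually_norm_pow_le _ hρ] with t ht
  have hLt : ‖L ^ t‖ ≤ s ^ t := by
    rwa [← Matrix.map_pow, frobenius_norm_map_eq _ (algebraMap ℝ ℂ) Complex.norm_real] at ht
  calc ‖γ ^ t • ((Lᵀ) ^ t * M * L ^ t)‖ ≤ γ ^ t * (‖L ^ t‖ * ‖M‖ * ‖L ^ t‖) := by
        rw [norm_smul, Real.norm_of_nonneg (by positivity), ← transpose_pow]
        gcongr
        refine (frobenius_norm_mul _ _).trans ?_
        gcongr
        exact (frobenius_norm_mul _ _).trans_eq (by rw [frobenius_norm_transpose])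
    _ ≤ γ ^ t * (s ^ t * ‖M‖ * s ^ t) := by gcongr
    _ = ‖M‖ * (γ * s ^ 2) ^ t := by ring

end Frobenius

namespace Matrix

variable {ι : Type*} [Fintype ι]

theorem eq_add_smul_transpose_mul_mul_of_hasSum [DecidableEq ι] {γ : ℝ} {L M P : Matrix ι ι ℝ}
    (h : HasSum (fun t : ℕ => γ ^ t • ((Lᵀ) ^ t * M * L ^ t)) P) :
    P = M + γ • (Lᵀ * P * L) := by
  have hshift := (hasSum_nat_add_iff' 1).2 h
  have hmap := ((h.mul_left Lᵀ).mul_right L).const_smul γ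
  have hterm : ∀ t : ℕ, γ ^ (t + 1) • ((Lᵀ) ^ (t + 1) * M * L ^ (t + 1)) =
      γ • (Lᵀ * (γ ^ t • ((Lᵀ) ^ t * M * L ^ t)) * L) := fun t => by
    rw [Matrix.mul_smul, Matrix.smul_mul, smul_smul, ← pow_succ', pow_succ L, pow_succ' Lᵀ]
    simp only [Matrix.mul_assoc]
  simp only [hterm, Finset.range_one, Finset.sum_singleton, pow_zero, one_smul, Matrix.one_mul,
    Matrix.mul_one] at hshift
  rw [← hshift.unique hmap, add_sub_cancel]

theorem posSemidef_of_hasSum {κ : Type*} {f : κ → Matrix ι ι ℝ} {P : Matrix ι ι ℝ}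
    (h : HasSum f P) (hf : ∀ i, (f i).PosSemidef) : P.PosSemidef := by
  refine .of_dotProduct_mulVec_nonneg ?_ fun x => ?_
  · have : HasSum f Pᴴ := by
      simpa only [fun i => (hf i).isHermitian.eq] using h.matrix_conjTranspose
    exact this.unique h
  · let q : Matrix ι ι ℝ →+ ℝ :=
      AddMonoidHom.mk' (fun X => star x ⬝ᵥ (X *ᵥ x)) fun X Y => by
        simp only [add_mulVec, dotProduct_add]
    have hq : HasSum (fun i => star x ⬝ᵥ (f i *ᵥ x)) (star x ⬝ᵥ (P *ᵥ x)) :=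
      h.map q (continuous_const.dotProduct (continuous_id.matrix_mulVec continuous_const))
    exact hasSum_le (fun i => (hf i).dotProduct_mulVec_nonneg x) hasSum_zero hq

theorem dotProduct_transpose_mul_self_mulVec_le {κ : Type*} [Fintype κ] (B : Matrix κ ι ℝ)
    (x : ι → ℝ) : x ⬝ᵥ ((Bᵀ * B) *ᵥ x) ≤ (Bᵀ * B).trace * (x ⬝ᵥ x) := by
  have hrow : ∀ k, (B *ᵥ x) k * (B *ᵥ x) k ≤ (∑ i, B k i ^ 2) * (x ⬝ᵥ x) := fun k => by
    simpa only [← sq, mulVec, dotProduct] using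
      Finset.sum_mul_sq_le_sq_mul_sq Finset.univ (B k) x
  calc x ⬝ᵥ ((Bᵀ * B) *ᵥ x) = ∑ k, (B *ᵥ x) k * (B *ᵥ x) k := by
        rw [← mulVec_mulVec, dotProduct_mulVec, vecMul_transpose]; rfl
    _ ≤ ∑ k, (∑ i, B k i ^ 2) * (x ⬝ᵥ x) := Finset.sum_le_sum fun k _ => hrow k
    _ = (Bᵀ * B).trace * (x ⬝ᵥ x) := by
        rw [← Finset.sum_mul, trace, Finset.sum_comm]
        simp only [diag_apply, mul_apply, transpose_apply, sq]

open scoped Matrix.Norms.L2Operator MatrixOrder in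
theorem PosSemidef.dotProduct_mulVec_le_trace_mul [DecidableEq ι] {P : Matrix ι ι ℝ}
    (hP : P.PosSemidef) (x : ι → ℝ) : x ⬝ᵥ (P *ᵥ x) ≤ P.trace * (x ⬝ᵥ x) := by
  obtain ⟨B, rfl⟩ := CStarAlgebra.nonneg_iff_eq_star_mul_self.mp hP.nonneg
  exact dotProduct_transpose_mul_self_mulVec_le B x

theorem mul_dotProduct_le_of_posSemidef_sub [DecidableEq ι] {M : Matrix ι ι ℝ} {c : ℝ}
    (h : (M - c • 1).PosSemidef) (x : ι → ℝ) : c * (x ⬝ᵥ x) ≤ x ⬝ᵥ (M *ᵥ x) := by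
  have := h.dotProduct_mulVec_nonneg x
  rw [star_trivial, sub_mulVec, dotProduct_sub, smul_mulVec, one_mulVec, dotProduct_smul,
    smul_eq_mul] at this
  linarith

theorem posSemidef_add_transpose_mul_mul_sub {κ : Type*} [Fintype κ] [DecidableEq ι]
    [DecidableEq κ] {Q : Matrix ι ι ℝ} {R : Matrix κ κ ℝ} {c : ℝ} (hc : 0 ≤ c)
    (hQ : (Q - c • 1).PosSemidef) (hR : (R - c • 1).PosSemidef) (G : Matrix κ ι ℝ) :
    (Q + Gᵀ * R * G - c • 1).PosSemidef := by
  have hR' : R.PosSemidef := by simpa using hR.add (PosSemidef.one.smul hc)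
  rw [add_sub_right_comm]
  simpa only [conjTranspose_eq_transpose_of_trivial] using
    hQ.add (hR'.conjTranspose_mul_mul_same G)

theorem pow_mulVec_eq_iterate [DecidableEq ι] (L : Matrix ι ι ℝ) (t : ℕ) (x : ι → ℝ) :
    L ^ t *ᵥ x = (L *ᵥ ·)^[t] x := by
  induction t generalizing x with
  | zero => simp
  | succ t ih => rw [pow_succ, ← mulVec_mulVec, ih, Function.iterate_succ_apply]

end Matrix

section Decay
variable {E : Type*} (f : E → E) (V w : E → ℝ)

theorem pow_mul_iterate_le {a c : ℝ} (ha : 0 ≤ a) (hc : 0 ≤ c)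
    (h : ∀ x, a * V (f x) ≤ c * V x) (t : ℕ) (x : E) :
    a ^ t * V (f^[t] x) ≤ c ^ t * V x := by
  induction t generalizing x with
  | zero => simp
  | succ t ih =>
    calc a ^ (t + 1) * V (f^[t + 1] x) = a * (a ^ t * V (f^[t] (f x))) := by
          rw [Function.iterate_succ_apply]; ring
      _ ≤ a * (c ^ t * V (f x)) := mul_le_mul_of_nonneg_left (ih (f x)) ha
      _ = c ^ t * (a * V (f x)) := by ring
      _ ≤ c ^ t * (c * V x) := mul_le_mul_of_nonneg_left (h x) (pow_nonneg hc t)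
      _ = c ^ (t + 1) * V x := by ring

variable {ℓ₀ γ J : ℝ}

theorem mul_apply_le_of_lyapunov (hℓ₀ : 0 ≤ ℓ₀) (hJ : 0 < J) (hVJ : ∀ x, V x ≤ J * w x)
    (hdec : ∀ x, ℓ₀ * w x + γ * V (f x) ≤ V x) (x : E) :
    γ * V (f x) ≤ (1 - ℓ₀ / J) * V x := by
  have : ℓ₀ / J * V x ≤ ℓ₀ * w x := by
    rw [div_mul_eq_mul_div, div_le_iff₀ hJ]
    nlinarith [hVJ x]
  nlinarith [hdec x]

theorem mul_pow_mul_iterate_le_of_lyapunov {r c : ℝ} (hℓ₀ : 0 ≤ ℓ₀) (hγ : 0 ≤ γ) (hJ : 0 < J)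
    (hr : 0 ≤ r) (hc : 0 ≤ c) (hrc : r * (1 - ℓ₀ / J) ≤ c)
    (hV0 : ∀ x, 0 ≤ V x) (hVJ : ∀ x, V x ≤ J * w x)
    (hdec : ∀ x, ℓ₀ * w x + γ * V (f x) ≤ V x) (t : ℕ) (x : E) :
    ℓ₀ * ((r * γ) ^ t * w (f^[t] x)) ≤ J * c ^ t * w x := by
  have hstep : ∀ x, r * γ * V (f x) ≤ c * V x := fun x => by
    calc r * γ * V (f x) = r * (γ * V (f x)) := by ring
      _ ≤ r * ((1 - ℓ₀ / J) * V x) :=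
        mul_le_mul_of_nonneg_left (mul_apply_le_of_lyapunov f V w hℓ₀ hJ hVJ hdec x) hr
      _ ≤ c * V x := by rw [← mul_assoc]; gcongr; exact hV0 x
  have hw : ∀ y, ℓ₀ * w y ≤ V y := fun y => by nlinarith [hdec y, hV0 (f y)]
  calc ℓ₀ * ((r * γ) ^ t * w (f^[t] x)) = (r * γ) ^ t * (ℓ₀ * w (f^[t] x)) := by ring
    _ ≤ (r * γ) ^ t * V (f^[t] x) := by gcongr; exact hw _
    _ ≤ c ^ t * V x := pow_mul_iterate_le f V (by positivity) hc hstep t x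
    _ ≤ c ^ t * (J * w x) := by gcongr; exact hVJ x
    _ = J * c ^ t * w x := by ring

end Decay

theorem spNorm_le_of_dotProduct_le {a b : ℕ} {M : Matrix (Fin a) (Fin b) ℝ} {D : ℝ} (hD : 0 ≤ D)
    (h : ∀ x, (M *ᵥ x) ⬝ᵥ (M *ᵥ x) ≤ D ^ 2 * (x ⬝ᵥ x)) : spNorm M ≤ D := by
  refine ContinuousLinearMap.opNorm_le_bound _ hD fun x => ?_
  have hsq : ‖toEuclideanLin M x‖ ^ 2 ≤ (D * ‖x‖) ^ 2 := by
    rw [mul_pow, ← real_inner_self_eq_norm_sq, ← real_inner_self_eq_norm_sq]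
    exact h x.ofLp
  exact (pow_le_pow_iff_left₀ (norm_nonneg _) (by positivity) two_ne_zero).1 hsq

theorem spNorm_smul_pow_le_of_lyapunov {N : ℕ} {L M : Matrix (Fin N) (Fin N) ℝ} {ℓ₀ γ r c : ℝ}
    (hℓ₀ : 0 < ℓ₀) (hM : (M - ℓ₀ • 1).PosSemidef) (hγ : 0 < γ)
    (hL : Real.sqrt γ * specRad L < 1) (hJ : 0 < (lyapunovSeries γ L M).trace)
    (hr : 0 ≤ r) (hc : 0 ≤ c) (hrc : r * (1 - ℓ₀ / (lyapunovSeries γ L M).trace) ≤ c) (t : ℕ) :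
    spNorm ((Real.sqrt (r * γ) • L) ^ t) ≤
      Real.sqrt ((lyapunovSeries γ L M).trace / ℓ₀) * Real.sqrt c ^ t := by
  have hP := hasSum_lyapunovSeries L M hγ hL
  set P := lyapunovSeries γ L M
  have hMpsd : M.PosSemidef := by simpa using hM.add (PosSemidef.one.smul hℓ₀.le)
  have hPpsd : P.PosSemidef := posSemidef_of_hasSum hP fun t => by
    simpa only [conjTranspose_eq_transpose_of_trivial, transpose_pow] using
      (hMpsd.conjTranspose_mul_mul_same (L ^ t)).smul (pow_nonneg hγ.le t)
  have hlyap : ∀ x, x ⬝ᵥ (P *ᵥ x) = x ⬝ᵥ (M *ᵥ x) + γ * ((L *ᵥ x) ⬝ᵥ (P *ᵥ (L *ᵥ x))) := by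
    intro x
    conv_lhs => rw [eq_add_smul_transpose_mul_mul_of_hasSum hP]
    rw [add_mulVec, dotProduct_add, smul_mulVec, dotProduct_smul, smul_eq_mul, ← mulVec_mulVec,
      ← mulVec_mulVec, dotProduct_mulVec x Lᵀ, vecMul_transpose]
  refine spNorm_le_of_dotProduct_le (by positivity) fun x => ?_
  have hdecay := mul_pow_mul_iterate_le_of_lyapunov (L *ᵥ ·) (fun x => x ⬝ᵥ (P *ᵥ x))
    (fun x => x ⬝ᵥ x) hℓ₀.le hγ.le hJ hr hc hrc
    (fun x => by simpa using hPpsd.dotProduct_mulVec_nonneg x)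
    hPpsd.dotProduct_mulVec_le_trace_mul
    (fun x => by rw [hlyap x]; linarith [mul_dotProduct_le_of_posSemidef_sub hM x]) t x
  have hD : (Real.sqrt (P.trace / ℓ₀) * Real.sqrt c ^ t) ^ 2 = P.trace / ℓ₀ * c ^ t := by
    rw [mul_pow, Real.sq_sqrt (by positivity), ← pow_mul, mul_comm t, pow_mul, Real.sq_sqrt hc]
  rw [smul_pow, smul_mulVec, dotProduct_smul, smul_dotProduct, smul_eq_mul, smul_eq_mul,
    ← mul_assoc, ← mul_pow, Real.mul_self_sqrt (by positivity), pow_mulVec_eq_iterate, hD,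
    div_mul_eq_mul_div, div_mul_eq_mul_div, le_div_iff₀ hℓ₀]
  linarith

theorem discount_rate_bounds {ℓ₀ J b ζ : ℝ} (hℓ₀ : 0 < ℓ₀) (hJ : ℓ₀ < J) (hb : J ≤ b)
    (hζ : 0 ≤ ζ) :
    0 ≤ 1 + ζ * (ℓ₀ / (b - ℓ₀)) ∧ 0 ≤ 1 - (1 - ζ) * ℓ₀ / b ∧
      (1 + ζ * (ℓ₀ / (b - ℓ₀))) * (1 - ℓ₀ / J) ≤ 1 - (1 - ζ) * ℓ₀ / b := by
  have hbℓ₀ : 0 < b - ℓ₀ := by linarith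
  have hb0 : 0 < b := by linarith
  have hr : 0 ≤ 1 + ζ * (ℓ₀ / (b - ℓ₀)) := by positivity
  have hmono : 1 - ℓ₀ / J ≤ 1 - ℓ₀ / b := by
    gcongr
    linarith
  have hfactor : (1 + ζ * (ℓ₀ / (b - ℓ₀))) * (1 - ℓ₀ / b) = 1 - (1 - ζ) * ℓ₀ / b := by
    field_simp [hbℓ₀.ne', hb0.ne']
    ring
  have hb1 : 0 ≤ 1 - ℓ₀ / b := by
    rw [sub_nonneg, div_le_one hb0]
    linarith
  exact ⟨hr, hfactor ▸ mul_nonneg hr hb1, hfactor ▸ mul_le_mul_of_nonneg_left hmono hr⟩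

theorem stmt16_general
    {n m p : ℕ}
    (A : Matrix (Fin n) (Fin n) ℝ) (B : Matrix (Fin n) (Fin m) ℝ) (C : Matrix (Fin p) (Fin n) ℝ)
    (Q : Matrix (Fin n) (Fin n) ℝ) (R : Matrix (Fin m) (Fin m) ℝ)
    (ℓ₀ : ℝ) (hℓ₀ : 0 < ℓ₀)
    (hQlb : (Q - ℓ₀ • (1 : Matrix (Fin n) (Fin n) ℝ)).PosSemidef)
    (hRlb : (R - ℓ₀ • (1 : Matrix (Fin m) (Fin m) ℝ)).PosSemidef)
    (γ : ℝ) (hγ : γ ∈ Set.Ioo (0 : ℝ) 1)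
    (K : Matrix (Fin m) (Fin p) ℝ) (hK : inS A B C γ K)
    (hJ : ℓ₀ < Jcost A B C Q R γ K)
    (Jhat : ℝ) (hJhat : |Jcost A B C Q R γ K - Jhat| ≤ Jcost A B C Q R γ K / 2)
    (ζ : ℝ) (hζ : ζ ∈ Set.Ioo (0 : ℝ) 1)
    (γ' : ℝ) (hγ' : γ' = (1 + ζ * (ℓ₀ / (2 * Jhat - ℓ₀))) * γ) :
    ∀ t : ℕ,
      spNorm ((Real.sqrt γ' • Acl A B C K) ^ t) ≤
        Real.sqrt (Jcost A B C Q R γ K / ℓ₀) *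
          Real.sqrt (1 - (1 - ζ) * ℓ₀ / (2 * Jhat)) ^ t := by
  have hcost : (Q + Cᵀ * Kᵀ * R * K * C - ℓ₀ • 1).PosSemidef := by
    simpa only [transpose_mul, Matrix.mul_assoc] using
      posSemidef_add_transpose_mul_mul_sub hℓ₀.le hQlb hRlb (K * C)
  have hb : Jcost A B C Q R γ K ≤ 2 * Jhat := by linarith [(abs_le.1 hJhat).2]
  obtain ⟨hr, hc, hrc⟩ := discount_rate_bounds hℓ₀ hJ hb hζ.1.le
  subst hγ'
  exact spNorm_smul_pow_le_of_lyapunov hℓ₀ hcost hγ.1 hK (hℓ₀.trans hJ) hr hc hrc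

/-- for every `t`,
`‖(√γ'(A − BKC))^t‖ ≤ √(J_γ(K)/ℓ₀)·(1 − (1 − ζ)ℓ₀/(2Jhat))^{t/2}`. -/
theorem stmt16
    {n m p : ℕ} (hn : 1 ≤ n) (hm : 1 ≤ m) (hp : 1 ≤ p)
    (A : Matrix (Fin n) (Fin n) ℝ) (B : Matrix (Fin n) (Fin m) ℝ) (C : Matrix (Fin p) (Fin n) ℝ)
    (Q : Matrix (Fin n) (Fin n) ℝ) (R : Matrix (Fin m) (Fin m) ℝ)
    (hQsymm : Q.IsSymm) (hRsymm : R.IsSymm)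
    (ℓ₀ ℓ₁ ψ φ : ℝ) (hℓ₀ : 0 < ℓ₀) (hℓ₀₁ : ℓ₀ ≤ ℓ₁) (hψ : 1 ≤ ψ) (hφ : 1 ≤ φ)
    (hQlb : (Q - ℓ₀ • (1 : Matrix (Fin n) (Fin n) ℝ)).PosSemidef)
    (hQub : (ℓ₁ • (1 : Matrix (Fin n) (Fin n) ℝ) - Q).PosSemidef)
    (hRlb : (R - ℓ₀ • (1 : Matrix (Fin m) (Fin m) ℝ)).PosSemidef)
    (hRub : (ℓ₁ • (1 : Matrix (Fin m) (Fin m) ℝ) - R).PosSemidef)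
    (hB : spNorm B ≤ ψ) (hC : spNorm C ≤ φ)
    (γ : ℝ) (hγ : γ ∈ Set.Ioo (0 : ℝ) 1)
    (K : Matrix (Fin m) (Fin p) ℝ) (hK : inS A B C γ K)
    (hJ : ℓ₀ < Jcost A B C Q R γ K)
    (Jhat : ℝ) (hJhat : |Jcost A B C Q R γ K - Jhat| ≤ Jcost A B C Q R γ K / 2)
    (ζ : ℝ) (hζ : ζ ∈ Set.Ioo (0 : ℝ) 1)
    (γ' : ℝ) (hγ' : γ' = (1 + ζ * (ℓ₀ / (2 * Jhat - ℓ₀))) * γ) :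
    ∀ t : ℕ,
      spNorm ((Real.sqrt γ' • Acl A B C K) ^ t) ≤
        Real.sqrt (Jcost A B C Q R γ K / ℓ₀) *
          Real.sqrt (1 - (1 - ζ) * ℓ₀ / (2 * Jhat)) ^ t :=
  stmt16_general A B C Q R ℓ₀ hℓ₀ hQlb hRlb γ hγ K hK hJ Jhat hJhat ζ hζ γ' hγ'
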